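/- If T is an equimeasurable map on symmetrizable functions, then for every measurable set A of finite measure and every α > 0, the set A_α = {x : T(α·1_A)(x) = α} is measurable with the same Lebesgue measure as A, and T(α·1_A)(x) ∈ (-∞, 0] ∪ {α} for almost every x. -/

import Mathlib

open MeasureTheory Set

/-- The essential infimum of a real-valued function, computed in `EReal`. -/
noncomputable def essInfE {n : ℕ} (f : EuclideanSpace ℝ (Fin n) → ℝ) : EReal :=
  essInf (fun x => (f x : EReal)) volume

/-- A function `f : ℝⁿ → ℝ` is symmetrizable if it is measurable and every
super-level set `{x | f x > t}` with `t > essinf f` has finite Lebesgue measure. -/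
def Symmetrizable {n : ℕ} (f : EuclideanSpace ℝ (Fin n) → ℝ) : Prop :=
  Measurable f ∧ ∀ t : ℝ, essInfE f < (t : EReal) → volume {x | t < f x} < ⊤

/-! The test function `f = α • 1_A` has super-level sets `{f > t} = A` for `0 ≤ t < α` and `∅`
for `t ≥ α`, so by equimeasurability `t ↦ |{T f > t}|` is constant (and finite) on `[0, α)` and
vanishes at `α`. Covering `{0 < T f < α}` by the countably many differences
`{T f > 0} \ {T f > q}` with rational `q ∈ (0, α)` shows that `T f` takes no values in `(0, α)`
up to a null set, hence `{T f > 0}` and `{T f = α}` agree a.e. and both have measure `|A|`. -/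

open scoped ENNReal

theorem measure_setOf_lt_and_lt_eq_zero {X : Type*} [MeasurableSpace X] {μ : Measure X}
    {g : X → ℝ} (hg : Measurable g) {a b : ℝ} (hfin : μ {x | a < g x} ≠ ∞)
    (hflat : ∀ t ∈ Ioo a b, μ {x | t < g x} = μ {x | a < g x}) :
    μ {x | a < g x ∧ g x < b} = 0 := by
  have hcover : {x | a < g x ∧ g x < b} ⊆
      ⋃ q : {q : ℚ // (q : ℝ) ∈ Ioo a b}, {x | a < g x} \ {x | (q : ℝ) < g x} := by
    rintro x ⟨hax, hxb⟩
    obtain ⟨q, hxq, hqb⟩ := exists_rat_btwn hxb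
    exact mem_iUnion.2 ⟨⟨q, hax.trans hxq, hqb⟩, hax, fun h => lt_asymm hxq h⟩
  refine measure_mono_null hcover (measure_iUnion_null fun q => ?_)
  have hsub : {x | (q : ℝ) < g x} ⊆ {x | a < g x} := fun x hx => q.2.1.trans hx
  rw [measure_sdiff hsub (measurableSet_lt measurable_const hg).nullMeasurableSet
    (hflat q q.2 ▸ hfin), hflat q q.2, tsub_self]

theorem setOf_lt_indicator_const {X : Type*} {s : Set X} {a t : ℝ} (ht : 0 ≤ t) :
    {x | t < s.indicator (fun _ => a) x} = {x | x ∈ s ∧ t < a} := by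
  ext x
  by_cases hx : x ∈ s <;> simp [hx, ht]

theorem symmetrizable_indicator_const {n : ℕ} {A : Set (EuclideanSpace ℝ (Fin n))}
    (hA : MeasurableSet A) (hAfin : volume A < ⊤) {a : ℝ} (ha : 0 ≤ a) :
    Symmetrizable (A.indicator fun _ => a) := by
  refine ⟨measurable_const.indicator hA, fun t ht => ?_⟩
  have hinf : (0 : EReal) ≤ essInfE (A.indicator fun _ => a) :=
    le_essInf_of_ae_le _ (Filter.Eventually.of_forall fun x =>
      EReal.coe_nonneg.2 (indicator_nonneg (fun _ _ => ha) x))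
  have ht0 : (0 : ℝ) ≤ t := EReal.coe_nonneg.1 (hinf.trans ht.le)
  rw [setOf_lt_indicator_const ht0]
  exact (measure_mono fun x hx => hx.1).trans_lt hAfin

theorem stmt_3 {n : ℕ}
    (T : (EuclideanSpace ℝ (Fin n) → ℝ) → (EuclideanSpace ℝ (Fin n) → ℝ))
    (hmap : ∀ f, Symmetrizable f → Symmetrizable (T f))
    (hequi : ∀ f, Symmetrizable f → ∀ t : ℝ,
      volume {x | t < T f x} = volume {x | t < f x})
    (A : Set (EuclideanSpace ℝ (Fin n))) (hA : MeasurableSet A) (hAfin : volume A < ⊤)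
    (α : ℝ) (hα : 0 < α) :
    MeasurableSet {x | T (A.indicator fun _ => α) x = α} ∧
    volume {x | T (A.indicator fun _ => α) x = α} = volume A ∧
    ∀ᵐ x ∂volume, T (A.indicator fun _ => α) x ≤ 0 ∨ T (A.indicator fun _ => α) x = α := by
  have hf := symmetrizable_indicator_const hA hAfin hα.le
  set g := T (A.indicator fun _ => α)
  have hg : Measurable g := (hmap _ hf).1
  have hlow : ∀ t ∈ Ico 0 α, volume {x | t < g x} = volume A := fun t ht => by
    rw [hequi _ hf, setOf_lt_indicator_const ht.1]
    simp [ht.2]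
  have hhigh : volume {x | α < g x} = 0 := by
    rw [hequi _ hf, setOf_lt_indicator_const hα.le]
    simp
  have hmid : volume {x | 0 < g x ∧ g x < α} = 0 :=
    measure_setOf_lt_and_lt_eq_zero hg (hlow 0 ⟨le_rfl, hα⟩ ▸ hAfin.ne) fun t ht => by
      rw [hlow t ⟨ht.1.le, ht.2⟩, hlow 0 ⟨le_rfl, hα⟩]
  have hae : ∀ᵐ x ∂volume, 0 < g x → g x = α := by
    refine ae_iff.2 (measure_mono_null (fun x hx => ?_) (measure_union_null hmid hhigh))
    obtain ⟨hpos, hne⟩ := Classical.not_imp.1 hx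
    exact (lt_or_gt_of_ne hne).imp (fun h => ⟨hpos, h⟩) id
  refine ⟨hg (measurableSet_singleton α), ?_, hae.mono fun x hx => (le_or_gt (g x) 0).imp_right hx⟩
  calc volume {x | g x = α} = volume {x | 0 < g x} :=
        measure_congr (Filter.eventuallyEq_set.2 (hae.mono fun x hx =>
          ⟨fun (h : g x = α) => show 0 < g x from h ▸ hα, hx⟩))
    _ = volume A := hlow 0 ⟨le_rfl, hα⟩
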